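/- arXiv:2212.14872 — 2 statements merged into one kernel-verified Lean document; each statement's English description precedes it below -/
import Mathlib

section
/- For λ ∈ ℂ with λ ∉ {0, 1, -1, i, -i}, the curve C = {(y₁:y₂:y₃:y₄) ∈ ℙ³(ℂ) : y₁² + y₃² + 2λy₂y₄ = 0, y₂² + y₄² + 2λy₁y₃ = 0} is a smooth complete intersection: the Jacobian matrix of the two quadrics Q₁ = y₁² + y₃² + 2λy₂y₄ and Q₂ = y₂² + y₄² + 2λy₁y₃ has rank 2 at every common nonzero zero of Q₁ and Q₂. -/
/-!
A rank drop of the Jacobian at `y` means that some member `s Q₁ + t Q₂` of the pencil is singular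
at `y`. In the variable pairs `(y₁, y₃)` and `(y₂, y₄)` that quadric splits into the binary forms
`s (y₁² + y₃²) + 2 t λ y₁ y₃` and `t (y₂² + y₄²) + 2 s λ y₂ y₄`, with discriminants proportional to
`s² - t² λ²` and `t² - s² λ²`. A common zero of `Q₁, Q₂` with one pair equal to zero is zero, so
both pairs of `y` are nonzero and both discriminants vanish; hence `s² = s² λ⁴`, and `λ⁴ ≠ 1`
forces `s = t = 0`.
-/

lemma pow_four_ne_one_of_ne {l : ℂ} (h1 : l ≠ 1) (h2 : l ≠ -1) (h3 : l ≠ Complex.I)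
    (h4 : l ≠ -Complex.I) : l ^ 4 ≠ 1 := by
  intro h
  have hfac : (l - 1) * (l + 1) * (l - Complex.I) * (l + Complex.I) = 0 := by
    linear_combination h + (1 - l ^ 2) * Complex.I_sq
  simp only [mul_eq_zero, sub_eq_zero, add_eq_zero_iff_eq_neg] at hfac
  tauto

lemma eq_zero_and_eq_zero_of_sq_add_sq_eq_zero {R : Type*} [CommRing R] [NoZeroDivisors R]
    {x z : R} (h : x ^ 2 + z ^ 2 = 0) (hxz : x * z = 0) : x = 0 ∧ z = 0 := by
  rcases mul_eq_zero.mp hxz with hx | hz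
  · subst hx
    exact ⟨rfl, pow_eq_zero_iff two_ne_zero |>.mp (by simpa using h)⟩
  · subst hz
    exact ⟨pow_eq_zero_iff two_ne_zero |>.mp (by simpa using h), rfl⟩

lemma eq_zero_and_eq_zero_of_quadrics {l x z u v : ℂ} (hl : l ≠ 0)
    (hQ1 : x ^ 2 + z ^ 2 + 2 * l * u * v = 0) (hQ2 : u ^ 2 + v ^ 2 + 2 * l * x * z = 0)
    (hu : u = 0) (hv : v = 0) : x = 0 ∧ z = 0 := by
  subst hu hv
  refine eq_zero_and_eq_zero_of_sq_add_sq_eq_zero (by simpa using hQ1) ?_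
  have : 2 * l * (x * z) = 0 := by linear_combination hQ2
  simpa [hl] using this

lemma sq_eq_of_binary_singular {s t l x z : ℂ} (hx : s * (2 * x) + t * (2 * l * z) = 0)
    (hz : s * (2 * z) + t * (2 * l * x) = 0) (hxz : ¬(x = 0 ∧ z = 0)) : s ^ 2 = t ^ 2 * l ^ 2 := by
  have hx' : (s ^ 2 - t ^ 2 * l ^ 2) * x = 0 := by linear_combination s / 2 * hx - t * l / 2 * hz
  have hz' : (s ^ 2 - t ^ 2 * l ^ 2) * z = 0 := by linear_combination s / 2 * hz - t * l / 2 * hx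
  by_contra hst
  have hst : s ^ 2 - t ^ 2 * l ^ 2 ≠ 0 := sub_ne_zero.mpr hst
  exact hxz ⟨(mul_eq_zero.mp hx').resolve_left hst, (mul_eq_zero.mp hz').resolve_left hst⟩

lemma eq_zero_and_eq_zero_of_sq_eq_mul_sq {s t l : ℂ} (hl : l ^ 4 ≠ 1)
    (hs : s ^ 2 = t ^ 2 * l ^ 2) (ht : t ^ 2 = s ^ 2 * l ^ 2) : s = 0 ∧ t = 0 := by
  have hs0 : s ^ 2 * (l ^ 4 - 1) = 0 := by linear_combination -l ^ 2 * ht - hs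
  have hs : s = 0 := pow_eq_zero_iff two_ne_zero |>.mp <|
    (mul_eq_zero.mp hs0).resolve_right (sub_ne_zero.mpr hl)
  subst hs
  exact ⟨rfl, pow_eq_zero_iff two_ne_zero |>.mp (by simpa using ht)⟩

/-- For `λ ∉ {0, ±1, ±i}`, the curve `{Q₁ = Q₂ = 0} ⊂ ℙ³(ℂ)` with
`Q₁ = y₁² + y₃² + 2λy₂y₄`, `Q₂ = y₂² + y₄² + 2λy₁y₃` is a smooth complete
intersection: the `2×4` Jacobian matrix of `(Q₁, Q₂)` has rank 2 at every nonzero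
common zero. -/
theorem stmt_17 (l : ℂ) (h0 : l ≠ 0) (h1 : l ≠ 1) (h2 : l ≠ -1)
    (h3 : l ≠ Complex.I) (h4 : l ≠ -Complex.I)
    (y : Fin 4 → ℂ) (hy : y ≠ 0)
    (hQ1 : y 0 ^ 2 + y 2 ^ 2 + 2 * l * y 1 * y 3 = 0)
    (hQ2 : y 1 ^ 2 + y 3 ^ 2 + 2 * l * y 0 * y 2 = 0) :
    (!![2 * y 0, 2 * l * y 3, 2 * y 2, 2 * l * y 1;
       2 * l * y 2, 2 * y 1, 2 * l * y 0, 2 * y 3] : Matrix (Fin 2) (Fin 4) ℂ).rank = 2 := by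
  refine (LinearIndependent.rank_matrix ?_).trans (Fintype.card_fin 2)
  refine LinearIndependent.pair_iff.mpr fun s t hst => ?_
  have e0 : s * (2 * y 0) + t * (2 * l * y 2) = 0 := by simpa using congrFun hst 0
  have e1 : s * (2 * l * y 3) + t * (2 * y 1) = 0 := by simpa using congrFun hst 1
  have e2 : s * (2 * y 2) + t * (2 * l * y 0) = 0 := by simpa using congrFun hst 2
  have e3 : s * (2 * l * y 1) + t * (2 * y 3) = 0 := by simpa using congrFun hst 3
  have hy02 : ¬(y 0 = 0 ∧ y 2 = 0) := fun ⟨ha, hc⟩ => by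
    obtain ⟨hb, hd⟩ := eq_zero_and_eq_zero_of_quadrics h0 hQ2 hQ1 ha hc
    exact hy (funext fun i => by fin_cases i <;> assumption)
  have hy13 : ¬(y 1 = 0 ∧ y 3 = 0) := fun ⟨hb, hd⟩ => by
    obtain ⟨ha, hc⟩ := eq_zero_and_eq_zero_of_quadrics h0 hQ1 hQ2 hb hd
    exact hy (funext fun i => by fin_cases i <;> assumption)
  exact eq_zero_and_eq_zero_of_sq_eq_mul_sq (pow_four_ne_one_of_ne h1 h2 h3 h4)
    (sq_eq_of_binary_singular e0 e2 hy02)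
    (sq_eq_of_binary_singular (by linear_combination e1) (by linear_combination e3) hy13)
end

section
/- The surface {(y₁:y₂:y₃:y₄) ∈ ℙ³(ℂ) : (y₁² + y₃²)y₁y₃ = (y₂² + y₄²)y₂y₄} contains, for each λ ∈ ℂ with λ ≠ 0, the elliptic quartic curve {Q₁(y,λ) = Q₂(y,λ) = 0} where Q₁ = y₁² + y₃² + 2λy₂y₄, Q₂ = y₂² + y₄² + 2λy₁y₃: indeed, if y₁y₃ ≠ 0 and y₂y₄ ≠ 0, then Q₁(y,λ) = Q₂(y,λ) = 0 holds for λ = -(y₁²+y₃²)/(2y₂y₄) if and only if (y₁²+y₃²)y₁y₃ = (y₂²+y₄²)y₂y₄. -/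
/-- (a) For every `λ ≠ 0`, any common zero of `Q₁ = y₁² + y₃² + 2λy₂y₄` and
`Q₂ = y₂² + y₄² + 2λy₁y₃` lies on the quartic surface
`(y₁² + y₃²)y₁y₃ = (y₂² + y₄²)y₂y₄`.
(b) If `y₁y₃ ≠ 0` and `y₂y₄ ≠ 0`, then for `λ = -(y₁² + y₃²)/(2y₂y₄)` one has
`Q₁(y,λ) = Q₂(y,λ) = 0` if and only if `(y₁² + y₃²)y₁y₃ = (y₂² + y₄²)y₂y₄`. -/
theorem stmt_19 :
    (∀ l : ℂ, l ≠ 0 → ∀ y1 y2 y3 y4 : ℂ,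
      y1 ^ 2 + y3 ^ 2 + 2 * l * y2 * y4 = 0 →
      y2 ^ 2 + y4 ^ 2 + 2 * l * y1 * y3 = 0 →
      (y1 ^ 2 + y3 ^ 2) * y1 * y3 = (y2 ^ 2 + y4 ^ 2) * y2 * y4) ∧
    (∀ y1 y2 y3 y4 : ℂ, y1 * y3 ≠ 0 → y2 * y4 ≠ 0 →
      ((y1 ^ 2 + y3 ^ 2 + 2 * (-(y1 ^ 2 + y3 ^ 2) / (2 * y2 * y4)) * y2 * y4 = 0 ∧
        y2 ^ 2 + y4 ^ 2 + 2 * (-(y1 ^ 2 + y3 ^ 2) / (2 * y2 * y4)) * y1 * y3 = 0) ↔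
       (y1 ^ 2 + y3 ^ 2) * y1 * y3 = (y2 ^ 2 + y4 ^ 2) * y2 * y4)) := by
  constructor
  · intro l hl y1 y2 y3 y4 h1 h2
    have e1 : y1 ^ 2 + y3 ^ 2 = -(2 * l * y2 * y4) := by linear_combination h1
    have e2 : y2 ^ 2 + y4 ^ 2 = -(2 * l * y1 * y3) := by linear_combination h2
    rw [e1, e2]; ring
  · intro y1 y2 y3 y4 h13 h24
    have h2 : y2 ≠ 0 := fun h => h24 (by simp [h])
    have h4 : y4 ≠ 0 := fun h => h24 (by simp [h])
    constructor
    · rintro ⟨-, hb⟩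
      field_simp at hb
      linear_combination -hb
    · intro h
      constructor
      · field_simp
        ring
      · field_simp
        linear_combination -h
end
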